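/- Let A = {a,b,c,d} and let R10 be the 4-agent profile with ≿_1: {a,b} ≻ {c,d}; ≿_2: {c,d} ≻ {a,b}; ≿_3: {a,c} ≻ d ≻ b; ≿_4: {b,d} ≻ a ≻ c. Then every anonymous, neutral, and efficient SDS f satisfies f(R10)(a) = f(R10)(d) = 1/2 and f(R10)(b) = f(R10)(c) = 0. -/

import Mathlib

open Classical

noncomputable section

variable {A : Type*} [Fintype A]

/-- A (weak) preference relation: complete and transitive. -/
def IsPref (r : A → A → Prop) : Prop :=
  (∀ x y, r x y ∨ r y x) ∧ ∀ x y z, r x y → r y z → r x z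

/-- A lottery over the alternatives. -/
def Lottery (A : Type*) [Fintype A] :=
  {p : A → ℝ // (∀ x, 0 ≤ p x) ∧ ∑ x, p x = 1}

/-- Probability that lottery `p` yields an alternative at least as good as `x` w.r.t. `r`. -/
def upperSum (r : A → A → Prop) (p : Lottery A) (x : A) : ℝ :=
  ∑ y, if r y x then p.1 y else 0

/-- `p` (weakly) stochastically dominates `q` w.r.t. the preference relation `r`. -/
def SDGe (r : A → A → Prop) (p q : Lottery A) : Prop :=
  ∀ x, upperSum r q x ≤ upperSum r p x

/-- Strict stochastic dominance. -/
def SDGt (r : A → A → Prop) (p q : Lottery A) : Prop :=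
  SDGe r p q ∧ ¬ SDGe r q p

/-- A profile assigning a preference relation to each of `n` agents; validity. -/
def ValidProfile {n : ℕ} (R : Fin n → A → A → Prop) : Prop :=
  ∀ i, IsPref (R i)

/-- `p` is SD-efficient at profile `R`. -/
def SDEfficientAt {n : ℕ} (R : Fin n → A → A → Prop) (p : Lottery A) : Prop :=
  ¬ ∃ q : Lottery A, (∀ i, SDGe (R i) q p) ∧ ∃ i, SDGt (R i) q p

def Anonymous {n : ℕ} (f : (Fin n → A → A → Prop) → Lottery A) : Prop :=
  ∀ R : Fin n → A → A → Prop, ValidProfile R →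
    ∀ σ : Equiv.Perm (Fin n), f (R ∘ σ) = f R

/-- Relabel a preference relation by a permutation of the alternatives. -/
def relabel (π : Equiv.Perm A) (r : A → A → Prop) : A → A → Prop :=
  fun x y => r (π.symm x) (π.symm y)

def relabelProfile {n : ℕ} (π : Equiv.Perm A) (R : Fin n → A → A → Prop) :
    Fin n → A → A → Prop :=
  fun i => relabel π (R i)

def Neutral {n : ℕ} (f : (Fin n → A → A → Prop) → Lottery A) : Prop :=
  ∀ R : Fin n → A → A → Prop, ValidProfile R →
    ∀ (π : Equiv.Perm A) (x : A), (f (relabelProfile π R)).1 (π x) = (f R).1 x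

def Efficient {n : ℕ} (f : (Fin n → A → A → Prop) → Lottery A) : Prop :=
  ∀ R : Fin n → A → A → Prop, ValidProfile R → SDEfficientAt R (f R)

def Strategyproof {n : ℕ} (f : (Fin n → A → A → Prop) → Lottery A) : Prop :=
  ¬ ∃ (R : Fin n → A → A → Prop) (i : Fin n) (r : A → A → Prop),
      ValidProfile R ∧ IsPref r ∧ SDGt (R i) (f (Function.update R i r)) (f R)


/-- The preference relation induced by a rank function (lower rank = better). -/
def prefOfRank (ρ : Fin 4 → ℕ) : Fin 4 → Fin 4 → Prop := fun x y => ρ x ≤ ρ y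

/-- Profile `R10`: with `a = 0`, `b = 1`, `c = 2`, `d = 3`;
`≿₁: {a,b},{c,d}`, `≿₂: {c,d},{a,b}`, `≿₃: {a,c},d,b`, `≿₄: {b,d},a,c`. -/
def R10 : Fin 4 → Fin 4 → Fin 4 → Prop :=
  ![prefOfRank ![0, 0, 1, 1], prefOfRank ![1, 1, 0, 0],
    prefOfRank ![0, 2, 0, 1], prefOfRank ![1, 0, 2, 0]]

/-!
Swapping `a ↔ d`, `b ↔ c` maps `R10` to itself up to swapping agents `1 ↔ 2` and `3 ↔ 4`, so
by neutrality and anonymity `f(R10)` gives equal probability to `a` and `d`, and to `b` and `c`.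
Among such lotteries only those with `b` and `c` at probability `0` are efficient: moving the
mass of `b` to `a` and that of `c` to `d` leaves agents 1 and 2 indifferent and, since the mass
of `b` equals that of `c`, makes agents 3 and 4 strictly better off.
-/

theorem prefOfRank_isPref (ρ : Fin 4 → ℕ) : IsPref (prefOfRank ρ) :=
  ⟨fun _ _ => le_total _ _, fun _ _ _ => le_trans⟩

theorem R10_valid : ValidProfile R10 := by
  intro i
  fin_cases i <;> exact prefOfRank_isPref _

theorem Lottery.nonneg (p : Lottery A) (x : A) : 0 ≤ p.1 x := p.2.1 x

theorem Lottery.sum_eq_one (p : Lottery A) : ∑ x, p.1 x = 1 := p.2.2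

theorem Lottery.sum_fin_four_eq_one (p : Lottery (Fin 4)) :
    p.1 0 + p.1 1 + p.1 2 + p.1 3 = 1 := by
  simpa only [Fin.sum_univ_four] using p.sum_eq_one

theorem apply_perm_eq_of_relabelProfile_eq_comp {n : ℕ}
    {f : (Fin n → A → A → Prop) → Lottery A} (hAnon : Anonymous f) (hNeut : Neutral f)
    {R : Fin n → A → A → Prop} (hR : ValidProfile R) {π : Equiv.Perm A}
    {σ : Equiv.Perm (Fin n)} (hπσ : relabelProfile π R = R ∘ σ) (x : A) :
    (f R).1 (π x) = (f R).1 x := by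
  have h := hNeut R hR π x
  rwa [hπσ, hAnon R hR σ] at h

theorem relabelProfile_R10 :
    relabelProfile ((Equiv.swap 0 3).trans (Equiv.swap 1 2)) R10 =
      R10 ∘ (Equiv.swap 0 1).trans (Equiv.swap 2 3) := by
  funext i x y
  fin_cases i <;> fin_cases x <;> fin_cases y <;> rfl

def shiftToAD (p : Lottery (Fin 4)) : Lottery (Fin 4) :=
  ⟨![p.1 0 + p.1 1, 0, 0, p.1 3 + p.1 2], by
    have := p.sum_fin_four_eq_one
    have := p.nonneg
    refine ⟨fun x => ?_, ?_⟩
    · fin_cases x <;> simp <;> linarith [this 0, this 1, this 2, this 3]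
    · simp only [Fin.sum_univ_four, Matrix.cons_val]
      linarith⟩

section shiftToAD

variable {p : Lottery (Fin 4)}

theorem sdGe_shiftToAD (hbc : p.1 2 = p.1 1) (i : Fin 4) : SDGe (R10 i) (shiftToAD p) p := by
  have := p.sum_fin_four_eq_one
  have := p.nonneg 1
  have := p.nonneg 2
  intro x
  fin_cases i <;> fin_cases x <;>
    simp [upperSum, R10, prefOfRank, shiftToAD, Fin.sum_univ_four] <;> linarith

theorem not_sdGe_shiftToAD (hb : 0 < p.1 1) : ¬ SDGe (R10 2) p (shiftToAD p) := by
  intro h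
  have hd := h 3
  simp [upperSum, R10, prefOfRank, shiftToAD, Fin.sum_univ_four] at hd
  linarith [p.sum_fin_four_eq_one]

theorem not_sdEfficientAt_R10 (hbc : p.1 2 = p.1 1) (hb : 0 < p.1 1) :
    ¬ SDEfficientAt R10 p := fun h =>
  h ⟨shiftToAD p, sdGe_shiftToAD hbc, 2, sdGe_shiftToAD hbc 2, not_sdGe_shiftToAD hb⟩

end shiftToAD

theorem R10_values (f : (Fin 4 → Fin 4 → Fin 4 → Prop) → Lottery (Fin 4))
    (hAnon : Anonymous f) (hNeut : Neutral f) (hEff : Efficient f) :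
    (f R10).1 0 = 1/2 ∧ (f R10).1 3 = 1/2 ∧ (f R10).1 1 = 0 ∧ (f R10).1 2 = 0 := by
  have hsym := apply_perm_eq_of_relabelProfile_eq_comp hAnon hNeut R10_valid relabelProfile_R10
  have had : (f R10).1 3 = (f R10).1 0 := hsym 0
  have hbc : (f R10).1 2 = (f R10).1 1 := hsym 1
  have hb : (f R10).1 1 = 0 := by
    by_contra hne
    exact not_sdEfficientAt_R10 hbc (lt_of_le_of_ne ((f R10).nonneg 1) (Ne.symm hne))
      (hEff R10 R10_valid)
  have := (f R10).sum_fin_four_eq_one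
  exact ⟨by linarith, by linarith, hb, by rw [hbc, hb]⟩

end
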